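/- arXiv:1606.08087 — 5 statements merged into one kernel-verified Lean document; each statement's English description precedes it below -/
import Mathlib

section
/- Duchet–Meyniel theorem: for all positive integers k and n, every n-vertex graph G contains either an independent set of size k or a clique minor K_t with t ≥ n/(2k−1). -/
open SimpleGraph
open scoped Classical

noncomputable section

/-- The graph `K_t ⊠ S_t`: a clique of size `t` (the `inl` part), an independent set of
size `t` (the `inr` part), joined by a perfect matching. -/
def ktst (t : ℕ) : SimpleGraph (Fin t ⊕ Fin t) :=
  SimpleGraph.fromRel (fun x y =>
    match x, y with
    | Sum.inl i, Sum.inl j => i ≠ j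
    | Sum.inl i, Sum.inr j => i = j
    | _, _ => False)

/-- The graph `K_t ⊠ K_t`: two cliques of size `t` joined by a perfect matching. -/
def ktkt (t : ℕ) : SimpleGraph (Fin t ⊕ Fin t) :=
  SimpleGraph.fromRel (fun x y =>
    match x, y with
    | Sum.inl i, Sum.inl j => i ≠ j
    | Sum.inr i, Sum.inr j => i ≠ j
    | Sum.inl i, Sum.inr j => i = j
    | _, _ => False)

/-- The cycle graph on `ZMod n`. -/
def cycleG (n : ℕ) : SimpleGraph (ZMod n) :=
  SimpleGraph.fromRel (fun x y => y = x + 1)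

/-- `σ` enumerates the vertices of `G` as a co-comparability ordering. -/
def IsCoCompOrdering {V : Type} {n : ℕ} (G : SimpleGraph V) (σ : Fin n ≃ V) : Prop :=
  ∀ i j k : Fin n, i < j → j < k → G.Adj (σ i) (σ k) →
    G.Adj (σ j) (σ i) ∨ G.Adj (σ j) (σ k)

/-- `G` contains `H` as an induced subgraph. -/
def ContainsInducedIso {V W : Type} (G : SimpleGraph V) (H : SimpleGraph W) : Prop :=
  ∃ f : W → V, Function.Injective f ∧ ∀ x y, H.Adj x y ↔ G.Adj (f x) (f y)

/-- A graph is chordal iff it has no induced cycle of length at least 4. -/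
def Chordal {V : Type} (G : SimpleGraph V) : Prop :=
  ∀ n, 4 ≤ n → ¬ ContainsInducedIso G (cycleG n)

/-- `G` contains `H` as an induced minor (via an induced minor model). -/
def HasInducedMinor {V W : Type} (G : SimpleGraph V) (H : SimpleGraph W) : Prop :=
  ∃ S : W → Set V,
    (∀ w, (G.induce (S w)).Connected) ∧
    (∀ w w', w ≠ w' → Disjoint (S w) (S w')) ∧
    (∀ w w', H.Adj w w' → ∃ a ∈ S w, ∃ b ∈ S w', G.Adj a b) ∧
    (∀ w w', w ≠ w' → ¬ H.Adj w w' → ∀ a ∈ S w, ∀ b ∈ S w', ¬ G.Adj a b)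

/-- `G` contains `K_t` as a minor (branch sets). -/
def HasCliqueMinor {V : Type} (G : SimpleGraph V) (t : ℕ) : Prop :=
  ∃ S : Fin t → Set V,
    (∀ i, (G.induce (S i)).Connected) ∧
    (∀ i j, i ≠ j → Disjoint (S i) (S j)) ∧
    (∀ i j, i ≠ j → ∃ a ∈ S i, ∃ b ∈ S j, G.Adj a b)

/-- There is an induced matching of `G` of size `m` between `A` and its complement:
the `2m` matched vertices induce exactly the `m` matching edges in `G`. -/
def IsSimMatching {V : Type} (G : SimpleGraph V) (A : Set V) (m : ℕ) : Prop :=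
  ∃ a b : Fin m → V,
    Function.Injective a ∧ Function.Injective b ∧
    (∀ i, a i ∈ A) ∧ (∀ i, b i ∉ A) ∧
    (∀ i j, G.Adj (a i) (b j) ↔ i = j) ∧
    (∀ i j, ¬ G.Adj (a i) (a j)) ∧
    (∀ i j, ¬ G.Adj (b i) (b j))

/-- There is an induced matching of size `m` in the bipartite graph `G[A, V \ A]`
of edges crossing the cut. -/
def IsMimMatching {V : Type} (G : SimpleGraph V) (A : Set V) (m : ℕ) : Prop :=
  ∃ a b : Fin m → V,
    Function.Injective a ∧ Function.Injective b ∧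
    (∀ i, a i ∈ A) ∧ (∀ i, b i ∉ A) ∧
    (∀ i j, G.Adj (a i) (b j) ↔ i = j)

def simval {V : Type} (G : SimpleGraph V) (A : Set V) : ℕ :=
  sSup {m | IsSimMatching G A m}

def mimval {V : Type} (G : SimpleGraph V) (A : Set V) : ℕ :=
  sSup {m | IsMimMatching G A m}

/-- GF(2)-rank of the `A × Aᶜ` submatrix of the adjacency matrix: the dimension of the
span of the rows of that submatrix (rows extended by zero on columns of `A`). -/
def cutrk {V : Type} [Fintype V] (G : SimpleGraph V) (A : Set V) : ℕ :=
  Module.finrank (ZMod 2) (Submodule.span (ZMod 2)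
    {r : V → ZMod 2 | ∃ a ∈ A, r = fun v => if v ∉ A ∧ G.Adj a v then 1 else 0})

/-- A branch-decomposition of a graph on vertex set `V`: a finite subcubic tree together
with an injection of `V` onto its leaves. -/
structure BranchDecomp (V : Type) [Fintype V] where
  β : Type
  finβ : Fintype β
  T : SimpleGraph β
  connected : T.Connected
  acyclic : T.IsAcyclic
  subcubic : ∀ x : β, (T.neighborSet x).ncard = 1 ∨ (T.neighborSet x).ncard = 3
  L : V → β
  inj : Function.Injective L
  leaves : ∀ x : β, (T.neighborSet x).ncard = 1 ↔ ∃ v, L v = x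

/-- The side of the cut induced by the tree edge `xy`, on the side of `x`. -/
def BranchDecomp.cut {V : Type} [Fintype V] (D : BranchDecomp V) (x y : D.β) : Set V :=
  {v | (D.T.deleteEdges {s(x, y)}).Reachable (D.L v) x}

/-- The `f`-width of a graph on vertex set `V`: minimum over branch-decompositions of the
maximum of `f` over the cuts of the decomposition. -/
def fWidth {V : Type} [Fintype V] (f : Set V → ℕ) : ℕ :=
  sInf {w | ∃ D : BranchDecomp V, ∀ x y, D.T.Adj x y → f (D.cut x y) ≤ w}

def simw {V : Type} [Fintype V] (G : SimpleGraph V) : ℕ := fWidth (simval G)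
def mimw {V : Type} [Fintype V] (G : SimpleGraph V) : ℕ := fWidth (mimval G)
def rankw {V : Type} [Fintype V] (G : SimpleGraph V) : ℕ := fWidth (cutrk G)

/-- Contraction of the edge `v₁v₂`: the vertex `v₂` is removed and `v₁` plays the role of
the contracted vertex `z`, adjacent to all former neighbors of `v₁` or `v₂`. -/
def contractE {V : Type} (G : SimpleGraph V) (v1 v2 : V) : SimpleGraph {v : V // v ≠ v2} :=
  SimpleGraph.fromRel (fun x y =>
    G.Adj x y ∨ ((x : V) = v1 ∧ G.Adj v2 y) ∨ ((y : V) = v1 ∧ G.Adj (x : V) v2))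

/-- The `(p × q)` column-clique grid. -/
def ccGrid (p q : ℕ) : SimpleGraph (Fin p × Fin q) :=
  SimpleGraph.fromRel (fun u v =>
    (u.2 = v.2) ∨ (u.1 = v.1 ∧ ((u.2 : ℕ) + 1 = v.2 ∨ (v.2 : ℕ) + 1 = u.2)))

/-- The `(p × q)` Hsu-clique chain graph. -/
def hsu (p q : ℕ) : SimpleGraph (Fin p × Fin q) :=
  SimpleGraph.fromRel (fun u v =>
    (u.2 = v.2) ∨ ((u.2 : ℕ) + 1 = v.2 ∧ u.1 ≤ v.1))

/-- The `(k × k)` grid graph. -/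
def gridG (k : ℕ) : SimpleGraph (Fin k × Fin k) :=
  SimpleGraph.fromRel (fun u v =>
    (u.1 = v.1 ∧ (u.2 : ℕ) + 1 = v.2) ∨ (u.2 = v.2 ∧ (u.1 : ℕ) + 1 = v.1))

/-- A tree-decomposition of `G`. -/
structure TreeDecomp (V : Type) (G : SimpleGraph V) where
  β : Type
  finβ : Fintype β
  T : SimpleGraph β
  connected : T.Connected
  acyclic : T.IsAcyclic
  B : β → Set V
  coverV : ∀ v : V, ∃ t, v ∈ B t
  coverE : ∀ u v, G.Adj u v → ∃ t, u ∈ B t ∧ v ∈ B t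
  coherent : ∀ v : V, (T.induce {t | v ∈ B t}).Connected

/-- Tree-width. -/
def tw {V : Type} (G : SimpleGraph V) : ℕ :=
  sInf {k | ∃ D : TreeDecomp V G, ∀ t, (D.B t).ncard ≤ k + 1}

/-- `G` is `d`-degenerate: every (induced) subgraph has a vertex of degree at most `d`. -/
def Degenerate {V : Type} (G : SimpleGraph V) (d : ℕ) : Prop :=
  ∀ S : Set V, S.Nonempty → ∃ v ∈ S, {u ∈ S | G.Adj v u}.ncard ≤ d

/-- Every graph on `N` vertices contains a clique of size `k` or an independent set of
size `l`. -/
def ramseyProp (N k l : ℕ) : Prop :=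
  ∀ G : SimpleGraph (Fin N),
    (∃ s : Finset (Fin N), G.IsNClique k s) ∨ (∃ s : Finset (Fin N), Gᶜ.IsNClique l s)

/-- The Ramsey number `R(k, l)`. -/
def ramsey (k l : ℕ) : ℕ := sInf {N | ramseyProp N k l}

/-- `G` is a circle graph: the intersection graph of chords of a circle, equivalently the
overlap graph of a family of intervals with pairwise distinct endpoints. -/
def IsCircleGraph {V : Type} (G : SimpleGraph V) : Prop :=
  ∃ a b : V → ℝ, (∀ v, a v < b v) ∧
    (∀ v w : V, v ≠ w → a v ≠ a w ∧ a v ≠ b w ∧ b v ≠ a w ∧ b v ≠ b w) ∧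
    (∀ v w, G.Adj v w ↔
      (a v < a w ∧ a w < b v ∧ b v < b w) ∨ (a w < a v ∧ a v < b w ∧ b w < b v))

/-- Vertex set of the split graph witnessing unbounded mim-width: a clique `Fin m`
together with one independent vertex for each nonempty subset of the clique. -/
abbrev splitV (m : ℕ) := Fin m ⊕ {S : Finset (Fin m) // S.Nonempty}

/-- The split graph with clique of size `m` and an independent set of size `2^m - 1`
whose vertices have pairwise distinct nonempty neighborhoods in the clique. -/
def splitG (m : ℕ) : SimpleGraph (splitV m) :=
  SimpleGraph.fromRel (fun x y =>
    match x, y with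
    | Sum.inl i, Sum.inl j => i ≠ j
    | Sum.inl i, Sum.inr S => i ∈ S.1
    | _, _ => False)

end

/-!
Grow a connected set `D` together with an independent set `I ⊆ D`, adding at each step a
vertex `u` at distance two from `D` and a common neighbour of `u` and `D`; then `|D| < 2|I|`
and `u` extends `I`. When `G[A]` is connected the growth stops only once `D` dominates `A`,
so `A` has a connected dominating set of size at most `2α(A) - 1`. Taking it as one branch
set and recursing on `A \ D`, whose vertices all see `D`, gives the bound; when `G[A]` is
disconnected, split off a union of components, whose independence numbers add up.
-/

namespace SimpleGraph

variable {V : Type} (G : SimpleGraph V)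

noncomputable def indepNumOn (A : Finset V) : ℕ :=
  (A.powerset.filter fun s : Finset V => G.IsIndepSet (s : Set V)).sup Finset.card

/-- `C` is a union of connected components of `G[A]`; connectivity of `G[A]` is used below in
the walk-free form "every nonempty closed `C` is `A`". -/
def IsClosedIn (A C : Finset V) : Prop :=
  C ⊆ A ∧ ∀ x ∈ C, ∀ y ∈ A, G.Adj x y → y ∈ C

def HasCliqueMinorIn (A : Set V) (t : ℕ) : Prop :=
  ∃ S : Fin t → Set V, (∀ i, S i ⊆ A) ∧
    (∀ i, (G.induce (S i)).Connected) ∧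
    (∀ i j, i ≠ j → Disjoint (S i) (S j)) ∧
    (∀ i j, i ≠ j → ∃ a ∈ S i, ∃ b ∈ S j, G.Adj a b)

variable {G}

section indepNumOn

variable {A B C s : Finset V}

theorem IsIndepSet.card_le_indepNumOn (hs : G.IsIndepSet (s : Set V)) (hsA : s ⊆ A) :
    s.card ≤ G.indepNumOn A :=
  Finset.le_sup (Finset.mem_filter.2 ⟨Finset.mem_powerset.2 hsA, hs⟩)

theorem exists_isIndepSet_card_eq_indepNumOn (A : Finset V) :
    ∃ s ⊆ A, G.IsIndepSet (s : Set V) ∧ s.card = G.indepNumOn A := by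
  have hempty : ∅ ∈ A.powerset.filter fun s : Finset V => G.IsIndepSet (s : Set V) :=
    Finset.mem_filter.2 ⟨Finset.empty_mem_powerset A, by
      rw [Finset.coe_empty]; exact Set.pairwise_empty _⟩
  obtain ⟨s, hs, hcard⟩ := Finset.exists_mem_eq_sup _ ⟨∅, hempty⟩ Finset.card
  obtain ⟨hsA, hind⟩ := Finset.mem_filter.1 hs
  exact ⟨s, Finset.mem_powerset.1 hsA, hind, hcard.symm⟩

theorem indepNumOn_mono (hAB : A ⊆ B) : G.indepNumOn A ≤ G.indepNumOn B := by
  obtain ⟨s, hsA, hs, hcard⟩ := G.exists_isIndepSet_card_eq_indepNumOn A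
  exact hcard ▸ hs.card_le_indepNumOn (hsA.trans hAB)

theorem indepNumOn_pos (hA : A.Nonempty) : 0 < G.indepNumOn A := by
  obtain ⟨v, hv⟩ := hA
  have hind : G.IsIndepSet (({v} : Finset V) : Set V) := by
    rw [Finset.coe_singleton]; exact Set.pairwise_singleton _ _
  exact hind.card_le_indepNumOn (Finset.singleton_subset_iff.2 hv)

theorem IsClosedIn.indepNumOn_add_indepNumOn_sdiff_le (hC : G.IsClosedIn A C) :
    G.indepNumOn C + G.indepNumOn (A \ C) ≤ G.indepNumOn A := by
  obtain ⟨s, hsC, hs, hscard⟩ := G.exists_isIndepSet_card_eq_indepNumOn C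
  obtain ⟨r, hrAC, hr, hrcard⟩ := G.exists_isIndepSet_card_eq_indepNumOn (A \ C)
  have hdisj : Disjoint s r := Finset.disjoint_of_subset_right hrAC
    (Finset.disjoint_of_subset_left hsC Finset.disjoint_sdiff)
  have hsr : G.IsIndepSet ((s ∪ r : Finset V) : Set V) := by
    have hcross : ∀ x ∈ s, ∀ y ∈ r, ¬ G.Adj x y := fun x hx y hy hxy =>
      (Finset.mem_sdiff.1 (hrAC hy)).2 (hC.2 x (hsC hx) y (Finset.mem_sdiff.1 (hrAC hy)).1 hxy)
    rw [Finset.coe_union, IsIndepSet, Set.pairwise_union]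
    exact ⟨hs, hr, fun x hx y hy _ =>
      ⟨hcross x hx y hy, fun hyx => hcross x hx y hy hyx.symm⟩⟩
  have := hsr.card_le_indepNumOn
    (Finset.union_subset (hsC.trans hC.1) (hrAC.trans Finset.sdiff_subset))
  rwa [Finset.card_union_of_disjoint hdisj, hscard, hrcard] at this

end indepNumOn

section HasCliqueMinorIn

variable {A B D : Set V} {t : ℕ}

theorem hasCliqueMinorIn_zero (A : Set V) : G.HasCliqueMinorIn A 0 :=
  ⟨Fin.elim0, fun i => i.elim0, fun i => i.elim0, fun i => i.elim0, fun i => i.elim0⟩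

theorem HasCliqueMinorIn.mono (h : G.HasCliqueMinorIn A t) (hAB : A ⊆ B) :
    G.HasCliqueMinorIn B t :=
  let ⟨S, hSA, hS⟩ := h
  ⟨S, fun i => (hSA i).trans hAB, hS⟩

theorem HasCliqueMinorIn.hasCliqueMinor (h : G.HasCliqueMinorIn A t) : HasCliqueMinor G t :=
  let ⟨S, _, hS⟩ := h
  ⟨S, hS⟩

theorem HasCliqueMinorIn.succ_of_dominating (h : G.HasCliqueMinorIn B t)
    (hD : (G.induce D).Connected) (hDB : Disjoint D B)
    (hdom : ∀ b ∈ B, ∃ d ∈ D, G.Adj d b) :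
    G.HasCliqueMinorIn (D ∪ B) (t + 1) := by
  obtain ⟨S, hSB, hS, hdisj, hadj⟩ := h
  have hDS : ∀ i, ∃ a ∈ D, ∃ b ∈ S i, G.Adj a b := fun i => by
    obtain ⟨⟨b, hb⟩⟩ := (hS i).nonempty
    obtain ⟨d, hd, hdb⟩ := hdom b (hSB i hb)
    exact ⟨d, hd, b, hb, hdb⟩
  refine ⟨Fin.cons D S, fun i => ?_, fun i => ?_, fun i j hij => ?_, fun i j hij => ?_⟩
  · cases i using Fin.cases
    · exact Set.subset_union_left
    · exact (hSB _).trans Set.subset_union_right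
  · cases i using Fin.cases
    · exact hD
    · exact hS _
  · cases i using Fin.cases <;> cases j using Fin.cases
    · exact absurd rfl hij
    · exact hDB.mono_right (hSB _)
    · exact (hDB.mono_right (hSB _)).symm
    · exact hdisj _ _ (ne_of_apply_ne Fin.succ hij)
  · cases i using Fin.cases <;> cases j using Fin.cases
    · exact absurd rfl hij
    · exact hDS _
    · obtain ⟨a, ha, b, hb, hab⟩ := hDS _
      exact ⟨b, hb, a, ha, hab.symm⟩
    · exact hadj _ _ (ne_of_apply_ne Fin.succ hij)

end HasCliqueMinorIn

section Dominating

variable {A D : Finset V}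

theorem exists_adj_adj_of_not_dominating
    (hA : ∀ C, G.IsClosedIn A C → C.Nonempty → C = A) (hDA : D ⊆ A) (hD : D.Nonempty)
    {u : V} (hu : u ∈ A \ D) (hudom : ∀ d ∈ D, ¬ G.Adj d u) :
    ∃ d ∈ D, ∃ w ∈ A, ∃ u' ∈ A, G.Adj d w ∧ G.Adj w u' ∧ w ∉ D ∧ u' ∉ D ∧
      ∀ d ∈ D, ¬ G.Adj d u' := by
  set N := A.filter fun x => x ∈ D ∨ ∃ d ∈ D, G.Adj d x
  by_contra! hno
  have hN : G.IsClosedIn A N := by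
    refine ⟨Finset.filter_subset _ _, fun x hx y hy hxy => Finset.mem_filter.2 ⟨hy, ?_⟩⟩
    obtain ⟨hxA, hxD | ⟨d, hd, hdx⟩⟩ := Finset.mem_filter.1 hx
    · exact Or.inr ⟨x, hxD, hxy⟩
    · by_contra! hyN
      have hxD : x ∉ D := fun hxD => hyN.2 x hxD hxy
      obtain ⟨d', hd', hd'y⟩ := hno d hd x hxA y hy hdx hxy hxD hyN.1
      exact hyN.2 d' hd' hd'y
  have huN : u ∈ N := hA N hN (hD.mono fun x hx => Finset.mem_filter.2 ⟨hDA hx, .inl hx⟩) ▸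
    (Finset.mem_sdiff.1 hu).1
  obtain ⟨-, huD | ⟨d, hd, hdu⟩⟩ := Finset.mem_filter.1 huN
  · exact (Finset.mem_sdiff.1 hu).2 huD
  · exact hudom d hd hdu

def IsGrowingPair (G : SimpleGraph V) (A D I : Finset V) : Prop :=
  D ⊆ A ∧ I ⊆ D ∧ G.IsIndepSet (I : Set V) ∧ (G.induce (D : Set V)).Connected ∧
    D.card + 1 ≤ 2 * I.card

theorem IsGrowingPair.union_pair {I : Finset V} (h : G.IsGrowingPair A D I) {d w u : V}
    (hd : d ∈ D) (hw : w ∈ A) (hu : u ∈ A) (hdw : G.Adj d w) (hwu : G.Adj w u) (hwD : w ∉ D)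
    (huD : u ∉ D) (hudom : ∀ d ∈ D, ¬ G.Adj d u) :
    G.IsGrowingPair A (D ∪ {w, u}) (insert u I) := by
  obtain ⟨hDA, hID, hI, hD, hcard⟩ := h
  refine ⟨Finset.union_subset hDA (Finset.insert_subset hw (Finset.singleton_subset_iff.2 hu)),
    Finset.insert_subset (by simp) (hID.trans Finset.subset_union_left), ?_, ?_, ?_⟩
  · rw [Finset.coe_insert, IsIndepSet, Set.pairwise_insert]
    exact ⟨hI, fun b hb _ => ⟨fun h => hudom b (hID hb) h.symm, hudom b (hID hb)⟩⟩
  · rw [Finset.coe_union, Finset.coe_pair]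
    exact connected_induce_union hD.preconnected (induce_pair_connected_of_adj hwu).preconnected
      hd (Set.mem_insert w _) hdw
  · have hdisj : Disjoint D {w, u} := by simp [hwD, huD]
    rw [Finset.card_union_of_disjoint hdisj, Finset.card_pair hwu.ne,
      Finset.card_insert_of_notMem fun huI => huD (hID huI)]
    omega

theorem exists_connected_dominating (hA : ∀ C, G.IsClosedIn A C → C.Nonempty → C = A)
    (hne : A.Nonempty) :
    ∃ D ⊆ A, D.Nonempty ∧ (G.induce (D : Set V)).Connected ∧
      D.card ≤ 2 * G.indepNumOn A - 1 ∧ ∀ u ∈ A \ D, ∃ d ∈ D, G.Adj d u := by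
  obtain ⟨v, hv⟩ := hne
  set P := (A.powerset ×ˢ A.powerset).filter fun p => G.IsGrowingPair A p.1 p.2
  have hmemP {D I : Finset V} (h : G.IsGrowingPair A D I) : (D, I) ∈ P :=
    Finset.mem_filter.2 ⟨Finset.mem_product.2
      ⟨Finset.mem_powerset.2 h.1, Finset.mem_powerset.2 (h.2.1.trans h.1)⟩, h⟩
  have hstart : G.IsGrowingPair A {v} {v} := by
    refine ⟨Finset.singleton_subset_iff.2 hv, subset_rfl, ?_, ?_, by simp⟩
    · rw [Finset.coe_singleton]; exact Set.pairwise_singleton _ _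
    · rw [Finset.coe_singleton]
      exact connected_iff _ |>.2 ⟨.of_subsingleton, ⟨⟨v, rfl⟩⟩⟩
  obtain ⟨⟨D, I⟩, hP, hmax⟩ := P.exists_max_image (fun p => p.1.card) ⟨_, hmemP hstart⟩
  have hDI : G.IsGrowingPair A D I := (Finset.mem_filter.1 hP).2
  obtain ⟨hDA, hID, hI, hD, hcard⟩ := id hDI
  obtain ⟨⟨x, hx⟩⟩ := hD.nonempty
  refine ⟨D, hDA, ⟨x, hx⟩, hD, ?_, ?_⟩
  · have := hI.card_le_indepNumOn (hID.trans hDA)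
    omega
  · by_contra! hdom
    obtain ⟨u, hu, hudom⟩ := hdom
    obtain ⟨d, hd, w, hw, u', hu', hdw, hwu', hwD, hu'D, hu'dom⟩ :=
      exists_adj_adj_of_not_dominating hA hDA ⟨x, hx⟩ hu hudom
    have hgrow := hDI.union_pair hd hw hu' hdw hwu' hwD hu'D hu'dom
    have hlt : D.card < (D ∪ {w, u'}).card :=
      Finset.card_lt_card (Finset.ssubset_iff_subset_ne.2 ⟨Finset.subset_union_left,
        fun h => hwD (h ▸ Finset.mem_union_right D (Finset.mem_insert_self w _))⟩)
    exact (hmax _ (hmemP hgrow)).not_gt hlt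

end Dominating

def HasDuchetMeynielMinorIn (G : SimpleGraph V) (A : Finset V) : Prop :=
  ∃ t, A.card ≤ (2 * G.indepNumOn A - 1) * t ∧ G.HasCliqueMinorIn A t

section HasDuchetMeynielMinorIn

variable {A C D : Finset V}

theorem hasDuchetMeynielMinorIn_empty : G.HasDuchetMeynielMinorIn ∅ :=
  ⟨0, by simp, hasCliqueMinorIn_zero _⟩

theorem HasDuchetMeynielMinorIn.of_sdiff_dominating (h : G.HasDuchetMeynielMinorIn (A \ D))
    (hDA : D ⊆ A) (hD : (G.induce (D : Set V)).Connected)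
    (hDcard : D.card ≤ 2 * G.indepNumOn A - 1) (hdom : ∀ u ∈ A \ D, ∃ d ∈ D, G.Adj d u) :
    G.HasDuchetMeynielMinorIn A := by
  obtain ⟨t, hcard, hminor⟩ := h
  have hα := indepNumOn_mono (G := G) (Finset.sdiff_subset : A \ D ⊆ A)
  refine ⟨t + 1, ?_, ?_⟩
  · calc A.card = (A \ D).card + D.card := (Finset.card_sdiff_add_card_eq_card hDA).symm
      _ ≤ (2 * G.indepNumOn A - 1) * t + (2 * G.indepNumOn A - 1) :=
        add_le_add (hcard.trans (Nat.mul_le_mul_right t (by omega))) hDcard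
      _ = (2 * G.indepNumOn A - 1) * (t + 1) := by ring
  · have := hminor.succ_of_dominating hD (Finset.disjoint_coe.2 Finset.disjoint_sdiff) hdom
    rwa [← Finset.coe_union, Finset.union_sdiff_of_subset hDA] at this

theorem IsClosedIn.hasDuchetMeynielMinorIn (hC : G.IsClosedIn A C) (hCne : C.Nonempty)
    (hCA : C ≠ A) (h₁ : G.HasDuchetMeynielMinorIn C)
    (h₂ : G.HasDuchetMeynielMinorIn (A \ C)) :
    G.HasDuchetMeynielMinorIn A := by
  obtain ⟨t₁, hcard₁, hminor₁⟩ := h₁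
  obtain ⟨t₂, hcard₂, hminor₂⟩ := h₂
  have hα := hC.indepNumOn_add_indepNumOn_sdiff_le
  have hα₁ := indepNumOn_pos (G := G) hCne
  have hα₂ := indepNumOn_pos (G := G)
    (Finset.sdiff_nonempty.2 fun hAC => hCA (hC.1.antisymm hAC))
  refine ⟨max t₁ t₂, ?_, ?_⟩
  · calc A.card = (A \ C).card + C.card := (Finset.card_sdiff_add_card_eq_card hC.1).symm
      _ ≤ (2 * G.indepNumOn (A \ C) - 1) * max t₁ t₂ +
          (2 * G.indepNumOn C - 1) * max t₁ t₂ :=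
        add_le_add (hcard₂.trans (Nat.mul_le_mul_left _ (le_max_right _ _)))
          (hcard₁.trans (Nat.mul_le_mul_left _ (le_max_left _ _)))
      _ ≤ (2 * G.indepNumOn A - 1) * max t₁ t₂ := by
        rw [← add_mul]
        exact Nat.mul_le_mul_right _ (by omega)
  · rcases le_total t₁ t₂ with h | h
    · rw [max_eq_right h]
      exact hminor₂.mono (Finset.coe_subset.2 Finset.sdiff_subset)
    · rw [max_eq_left h]
      exact hminor₁.mono (Finset.coe_subset.2 hC.1)

end HasDuchetMeynielMinorIn

theorem hasDuchetMeynielMinorIn (A : Finset V) : G.HasDuchetMeynielMinorIn A := by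
  induction A using Finset.strongInduction with | H A ih => ?_
  rcases A.eq_empty_or_nonempty with rfl | hne
  · exact hasDuchetMeynielMinorIn_empty
  by_cases hconn : ∀ C, G.IsClosedIn A C → C.Nonempty → C = A
  · obtain ⟨D, hDA, hDne, hD, hDcard, hdom⟩ := exists_connected_dominating hconn hne
    exact (ih _ (Finset.sdiff_ssubset hDA hDne)).of_sdiff_dominating hDA hD hDcard hdom
  · obtain ⟨C, hC, hCne, hCA⟩ : ∃ C, G.IsClosedIn A C ∧ C.Nonempty ∧ C ≠ A := by
      simpa only [not_forall, exists_prop] using hconn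
    exact hC.hasDuchetMeynielMinorIn hCne hCA
      (ih C (Finset.ssubset_iff_subset_ne.2 ⟨hC.1, hCA⟩))
      (ih _ (Finset.sdiff_ssubset hC.1 hCne))

end SimpleGraph

theorem stmt12_general {V : Type} [Fintype V] (G : SimpleGraph V) (k : ℕ) :
    (∃ s : Finset V, s.card = k ∧ ∀ a ∈ s, ∀ b ∈ s, a ≠ b → ¬ G.Adj a b) ∨
    (∃ t : ℕ, Fintype.card V ≤ (2 * k - 1) * t ∧ HasCliqueMinor G t) := by
  obtain ⟨t, hcard, hminor⟩ := G.hasDuchetMeynielMinorIn Finset.univ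
  by_cases hk : k ≤ G.indepNumOn Finset.univ
  · obtain ⟨s, -, hs, hscard⟩ := G.exists_isIndepSet_card_eq_indepNumOn Finset.univ
    obtain ⟨r, hrs, hrcard⟩ := Finset.exists_subset_card_eq (hscard ▸ hk)
    exact .inl ⟨r, hrcard, fun a ha b hb hab => hs (hrs ha) (hrs hb) hab⟩
  · refine .inr ⟨t, ?_, hminor.hasCliqueMinor⟩
    exact hcard.trans (Nat.mul_le_mul_right t (by omega))

/-- Duchet–Meyniel theorem. Every `n`-vertex graph contains an independent
set of size `k` or a `K_t`-minor with `t ≥ n/(2k − 1)`. -/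
theorem stmt12 {V : Type} [Fintype V] (G : SimpleGraph V) (k : ℕ) (hk : 1 ≤ k) :
    (∃ s : Finset V, s.card = k ∧ ∀ a ∈ s, ∀ b ∈ s, a ≠ b → ¬ G.Adj a b) ∨
    (∃ t : ℕ, Fintype.card V ≤ (2 * k - 1) * t ∧ HasCliqueMinor G t) :=
  stmt12_general G k
end

section
/- Every graph G with sim-width at most w and with no induced minor isomorphic to K_t ⊠ K_t or K_t ⊠ S_t has mim-width at most 8(w+1)t³ − 1. More precisely, any branch-decomposition of G of sim-width at most w has mim-width at most 8(w+1)t³ − 1. -/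
/-!
Fix a cut `A` and an induced matching `a i b i` (`i ∈ ι`) of the bipartite graph of crossing
edges, and read the graphs that `G` induces on the `a i` and on the `b i` as graphs `G_a`, `G_b` on
`ι`. An index set independent in both is an induced matching of `G`, so it has at most `w`
elements. The Duchet–Meyniel bound (`q (2k - 1)` vertices carry an independent set of size `k` or
a `K_q`-model) applied to `G_b`, and then to `G_a` on the independent set or on representatives of
the branch sets it yields, gives either `K_t`-models on both sides that meet along the matching
exactly on the diagonal, hence `K_t ⊠ K_t`, or a `K_t`-model on one side whose `t` matched
representatives are independent on the other side, hence `K_t ⊠ S_t`. So a cut of sim-value at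
most `w` and mim-value at least `8(w+1)t³` yields one of the excluded induced minors.
-/

open SimpleGraph
open scoped Classical

open Finset Function

section CliqueModel

variable {ι V : Type*}

structure IsCliqueModel (H : SimpleGraph ι) {q : ℕ} (B : Fin q → Set ι) : Prop where
  connected : ∀ i, (H.induce (B i)).Connected
  disjoint : Pairwise (Disjoint on B)
  exists_adj : Pairwise fun i j => ∃ x ∈ B i, ∃ y ∈ B j, H.Adj x y

variable {H : SimpleGraph ι} {q : ℕ} {B : Fin q → Set ι}

namespace IsCliqueModel

lemma nonempty (hB : IsCliqueModel H B) (i : Fin q) : (B i).Nonempty :=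
  Set.nonempty_coe_sort.mp (hB.connected i).nonempty

lemma mem_iff (hB : IsCliqueModel H B) {x : Fin q → ι} (hx : ∀ i, x i ∈ B i) {i j : Fin q} :
    x i ∈ B j ↔ i = j := by
  refine ⟨fun h => ?_, fun h => h ▸ hx i⟩
  by_contra hij
  exact Set.disjoint_left.mp (hB.disjoint hij) (hx i) h

lemma injective_of_mem (hB : IsCliqueModel H B) {x : Fin q → ι} (hx : ∀ i, x i ∈ B i) :
    Injective x := fun _ j h => (hB.mem_iff hx).mp (h ▸ hx j)

lemma comp (hB : IsCliqueModel H B) {r : ℕ} {κ : Fin r → Fin q} (hκ : Injective κ) :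
    IsCliqueModel H (B ∘ κ) :=
  ⟨fun i => hB.connected (κ i), fun _ _ hij => hB.disjoint (hκ.ne hij),
    fun _ _ hij => hB.exists_adj (hκ.ne hij)⟩

lemma cons (hB : IsCliqueModel H B) {D : Set ι} (hD : (H.induce D).Connected)
    (hdisj : ∀ i, Disjoint D (B i)) (hadj : ∀ i, ∃ x ∈ D, ∃ y ∈ B i, H.Adj x y) :
    IsCliqueModel H (Fin.cons D B : Fin (q + 1) → Set ι) := by
  refine ⟨Fin.cases hD hB.connected, ?_, ?_⟩
  · intro i j hij
    cases i using Fin.cases <;> cases j using Fin.cases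
    · exact absurd rfl hij
    · exact hdisj _
    · exact (hdisj _).symm
    · exact hB.disjoint (fun h => hij (congrArg _ h))
  · intro i j hij
    cases i using Fin.cases <;> cases j using Fin.cases
    · exact absurd rfl hij
    · exact hadj _
    · obtain ⟨x, hx, y, hy, hxy⟩ := hadj _
      exact ⟨y, hy, x, hx, hxy.symm⟩
    · exact hB.exists_adj (fun h => hij (congrArg _ h))

end IsCliqueModel

lemma connected_induce_image_of_comap {G : SimpleGraph V} {f : ι → V} {P : Set ι}
    (h : ((G.comap f).induce P).Connected) : (G.induce (f '' P)).Connected :=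
  let φ : (G.comap f).induce P →g G.induce (f '' P) :=
    ⟨fun x => ⟨f x, Set.mem_image_of_mem f x.2⟩, fun hxy => hxy⟩
  h.map φ (by rintro ⟨_, x, hx, rfl⟩; exact ⟨⟨x, hx⟩, rfl⟩)

lemma IsCliqueModel.image {G : SimpleGraph V} {f : ι → V} (hf : Injective f)
    (hB : IsCliqueModel (G.comap f) B) : IsCliqueModel G (fun i => f '' B i) :=
  ⟨fun i => connected_induce_image_of_comap (hB.connected i),
    fun _ _ hij => (Set.disjoint_image_iff hf).mpr (hB.disjoint hij),
    fun _ _ hij => by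
      obtain ⟨x, hx, y, hy, hxy⟩ := hB.exists_adj hij
      exact ⟨f x, Set.mem_image_of_mem f hx, f y, Set.mem_image_of_mem f hy, hxy⟩⟩

end CliqueModel

section DuchetMeyniel

variable {ι : Type*} {H : SimpleGraph ι}

def IsConnectedWithLargeIndep (H : SimpleGraph ι) (D : Finset ι) : Prop :=
  (H.induce (D : Set ι)).Connected ∧ ∃ I ⊆ D, H.IsIndepSet (I : Set ι) ∧ #D < 2 * #I

def DuchetMeynielBound (H : SimpleGraph ι) (s : Finset ι) : Prop :=
  ∃ q, ∃ B : Fin q → Set ι, (∀ i, B i ⊆ s) ∧ IsCliqueModel H B ∧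
    ∃ I ⊆ s, H.IsIndepSet (I : Set ι) ∧ #s ≤ q * (2 * #I - 1)

lemma isConnectedWithLargeIndep_singleton (v : ι) : IsConnectedWithLargeIndep H {v} := by
  refine ⟨?_, {v}, subset_rfl, by simp, by simp⟩
  rw [coe_singleton]
  have : Nonempty ({v} : Set ι) := ⟨⟨v, rfl⟩⟩
  exact ⟨.of_subsingleton⟩

lemma IsConnectedWithLargeIndep.insert_insert {D : Finset ι} (hD : IsConnectedWithLargeIndep H D)
    {u x y : ι} (hu : u ∈ D) (hux : H.Adj u x) (hx : x ∉ D) (hxy : H.Adj x y) (hy : y ∉ D)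
    (hDy : ∀ z ∈ D, ¬ H.Adj z y) : IsConnectedWithLargeIndep H (insert y (insert x D)) := by
  obtain ⟨hconn, I, hID, hI, hcard⟩ := hD
  have hsingleton (v : ι) : (H.induce {v}).Preconnected := .of_subsingleton
  have hDx : (H.induce (D ∪ {x} : Set ι)).Connected :=
    connected_induce_union hconn.preconnected (hsingleton x) hu rfl hux
  have hDxy := connected_induce_union hDx.preconnected (hsingleton y) (Or.inr rfl) rfl hxy
  have hyI : y ∉ I := fun h => hy (hID h)
  rw [Set.union_singleton, Set.union_singleton, ← coe_insert, ← coe_insert] at hDxy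
  refine ⟨hDxy, insert y I, insert_subset_insert _ (hID.trans (subset_insert _ _)), ?_, ?_⟩
  · rw [coe_insert]
    exact hI.insert fun z hz _ => ⟨fun h => hDy z (hID hz) h.symm, hDy z (hID hz)⟩
  · rw [card_insert_of_notMem hyI, card_insert_of_notMem (by simp [hy, hxy.ne']),
      card_insert_of_notMem hx]
    omega

lemma duchetMeynielBound_empty : DuchetMeynielBound H ∅ :=
  ⟨0, Fin.elim0, fun i => i.elim0, ⟨fun i => i.elim0, fun i => i.elim0, fun i => i.elim0⟩,
    ∅, subset_rfl, by simp, by simp⟩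

lemma DuchetMeynielBound.union {C R : Finset ι} (hC : DuchetMeynielBound H C)
    (hR : DuchetMeynielBound H R) (hCR : Disjoint C R) (hadj : ∀ x ∈ C, ∀ y ∈ R, ¬ H.Adj x y) :
    DuchetMeynielBound H (C ∪ R) := by
  obtain ⟨q₁, B₁, hB₁s, hB₁, I₁, hI₁s, hI₁, hC₁⟩ := hC
  obtain ⟨q₂, B₂, hB₂s, hB₂, I₂, hI₂s, hI₂, hC₂⟩ := hR
  obtain ⟨q, B, hBs, hB, hq₁, hq₂⟩ : ∃ q, ∃ B : Fin q → Set ι, (∀ i, B i ⊆ ↑(C ∪ R)) ∧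
      IsCliqueModel H B ∧ q₁ ≤ q ∧ q₂ ≤ q := by
    rcases le_total q₁ q₂ with h | h
    · exact ⟨q₂, B₂, fun i => (hB₂s i).trans (by simp), hB₂, h, le_rfl⟩
    · exact ⟨q₁, B₁, fun i => (hB₁s i).trans (by simp), hB₁, le_rfl, h⟩
  have hI : H.IsIndepSet (↑(I₁ ∪ I₂) : Set ι) := by
    rw [coe_union]
    refine Set.pairwise_union.mpr ⟨hI₁, hI₂, fun x hx y hy _ => ⟨?_, ?_⟩⟩
    · exact hadj x (hI₁s hx) y (hI₂s hy)
    · exact fun h => hadj x (hI₁s hx) y (hI₂s hy) h.symm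
  have hI₁₂ : Disjoint I₁ I₂ := hCR.mono hI₁s hI₂s
  refine ⟨q, B, hBs, hB, I₁ ∪ I₂, union_subset_union hI₁s hI₂s, hI, ?_⟩
  rw [card_union_of_disjoint hCR, card_union_of_disjoint hI₁₂]
  calc #C + #R ≤ q * (2 * #I₁ - 1) + q * (2 * #I₂ - 1) :=
        add_le_add (hC₁.trans (Nat.mul_le_mul_right _ hq₁))
          (hC₂.trans (Nat.mul_le_mul_right _ hq₂))
    _ = q * ((2 * #I₁ - 1) + (2 * #I₂ - 1)) := (mul_add _ _ _).symm
    _ ≤ q * (2 * (#I₁ + #I₂) - 1) := Nat.mul_le_mul_left _ (by omega)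

lemma DuchetMeynielBound.of_dominating {C D : Finset ι} (hrest : DuchetMeynielBound H (C \ D))
    (hD : IsConnectedWithLargeIndep H D) (hDC : D ⊆ C)
    (hdom : ∀ x ∈ C, x ∉ D → ∃ u ∈ D, H.Adj u x) : DuchetMeynielBound H C := by
  obtain ⟨q, B, hBs, hB, I', hI's, hI', hcard'⟩ := hrest
  obtain ⟨hconn, I, hID, hI, hcard⟩ := hD
  have hBCD (i : Fin q) : B i ⊆ ↑C \ ↑D := by simpa using hBs i
  have hmodel : IsCliqueModel H (Fin.cons (D : Set ι) B : Fin (q + 1) → Set ι) := by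
    refine hB.cons hconn (fun i => Set.disjoint_of_subset_right (hBCD i) Set.disjoint_sdiff_right)
      fun i => ?_
    obtain ⟨y, hy⟩ := hB.nonempty i
    obtain ⟨u, hu, huy⟩ := hdom y (hBCD i hy).1 (hBCD i hy).2
    exact ⟨u, hu, y, hy, huy⟩
  obtain ⟨J, hJC, hJ, hIJ, hI'J⟩ : ∃ J ⊆ C, H.IsIndepSet (J : Set ι) ∧ #I ≤ #J ∧ #I' ≤ #J := by
    rcases le_total #I #I' with h | h
    · exact ⟨I', hI's.trans sdiff_subset, hI', h, le_rfl⟩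
    · exact ⟨I, hID.trans hDC, hI, le_rfl, h⟩
  refine ⟨q + 1, _, Fin.cases (by simpa using hDC) (fun i => (hBs i).trans (by simp)), hmodel,
    J, hJC, hJ, ?_⟩
  calc #C = #(C \ D) + #D := (card_sdiff_add_card_eq_card hDC).symm
    _ ≤ q * (2 * #J - 1) + (2 * #J - 1) :=
        add_le_add (hcard'.trans (Nat.mul_le_mul_left _ (by omega))) (by omega)
    _ = (q + 1) * (2 * #J - 1) := by ring

/-- A largest connected `D ⊆ s` with an independent subset of more than half its size dominates
its closed neighbourhood `C` in `s`, and no edge joins `C` to `s \ C` (an edge `xy` with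
`x ∈ C \ D` would let `D` grow by `x` and `y`). So `D` extends a clique model found in `C \ D`,
and the bounds for `C` and `s \ C` add up. -/
theorem duchetMeynielBound (H : SimpleGraph ι) (s : Finset ι) : DuchetMeynielBound H s := by
  induction s using Finset.strongInduction with
  | H s ih =>
  rcases s.eq_empty_or_nonempty with rfl | ⟨v, hv⟩
  · exact duchetMeynielBound_empty
  obtain ⟨D, hDgood, hmax⟩ := exists_max_image ({D ∈ s.powerset | IsConnectedWithLargeIndep H D})
    card ⟨{v}, by simpa using ⟨hv, isConnectedWithLargeIndep_singleton v⟩⟩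
  rw [mem_filter, mem_powerset] at hDgood
  obtain ⟨hDs, hD⟩ := hDgood
  set C := {x ∈ s | x ∈ D ∨ ∃ u ∈ D, H.Adj u x} with hC
  have hDC : D ⊆ C := fun x hx => mem_filter.mpr ⟨hDs hx, .inl hx⟩
  have hCs : C ⊆ s := filter_subset _ _
  have hDne : D.Nonempty := coe_nonempty.mp (Set.nonempty_coe_sort.mp hD.1.nonempty)
  have hclosed : ∀ x ∈ C, ∀ y ∈ s, H.Adj x y → y ∈ C := by
    intro x hx y hy hxy
    by_contra hyC
    simp only [hC, mem_filter, not_and, not_or, not_exists] at hx hyC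
    obtain ⟨hyD, hDy⟩ := hyC hy
    rcases hx.2 with hxD | ⟨u, hu, hux⟩
    · exact hDy x hxD hxy
    have hxD : x ∉ D := fun h => hDy x h hxy
    have hgrow := hD.insert_insert hu hux hxD hxy hyD fun z hz => hDy z hz
    have hlt : #D < #(insert y (insert x D)) :=
      card_lt_card ((ssubset_insert hxD).trans_subset (subset_insert _ _))
    refine hlt.not_ge (hmax _ (mem_filter.mpr ⟨mem_powerset.mpr ?_, hgrow⟩))
    exact insert_subset hy (insert_subset hx.1 hDs)
  have hCbound : DuchetMeynielBound H C := by
    refine (ih _ ?_).of_dominating hD hDC fun x hx hxD => ?_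
    · exact (sdiff_ssubset hDC hDne).trans_subset hCs
    · simpa [hC, hxD] using (mem_filter.mp hx).2
  have hrest := ih (s \ C) (sdiff_ssubset hCs (hDne.mono hDC))
  rw [← union_sdiff_of_subset hCs]
  exact hCbound.union hrest disjoint_sdiff fun x hx y hy hxy =>
    (mem_sdiff.mp hy).2 (hclosed x hx y (mem_sdiff.mp hy).1 hxy)

theorem exists_isNIndepSet_or_isCliqueModel (H : SimpleGraph ι) (s : Finset ι) {k q : ℕ}
    (hs : q * (2 * k - 1) ≤ #s) :
    (∃ T ⊆ s, H.IsNIndepSet k T) ∨ ∃ B : Fin q → Set ι, (∀ i, B i ⊆ s) ∧ IsCliqueModel H B := by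
  obtain ⟨r, B, hBs, hB, I, hIs, hI, hcard⟩ := duchetMeynielBound H s
  by_cases hk : k ≤ #I
  · obtain ⟨T, hTI, hT⟩ := exists_subset_card_eq hk
    exact .inl ⟨T, hTI.trans hIs, ⟨hI.mono (coe_subset.mpr hTI), hT⟩⟩
  · have hqr : q ≤ r := Nat.le_of_mul_le_mul_right
      (hs.trans (hcard.trans (Nat.mul_le_mul_left _ (by omega)))) (by omega : 0 < 2 * k - 1)
    exact .inr ⟨B ∘ Fin.castLE hqr, fun i => hBs _, hB.comp (Fin.castLE_injective hqr)⟩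

end DuchetMeyniel

@[simp] lemma ktkt_adj_inl_inl {t : ℕ} (i j : Fin t) :
    (ktkt t).Adj (.inl i) (.inl j) ↔ i ≠ j := by
  simp [ktkt, eq_comm]

@[simp] lemma ktkt_adj_inl_inr {t : ℕ} (i j : Fin t) :
    (ktkt t).Adj (.inl i) (.inr j) ↔ i = j := by
  simp [ktkt]

@[simp] lemma ktkt_adj_inr_inr {t : ℕ} (i j : Fin t) :
    (ktkt t).Adj (.inr i) (.inr j) ↔ i ≠ j := by
  simp [ktkt, eq_comm]

@[simp] lemma ktst_adj_inl_inl {t : ℕ} (i j : Fin t) :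
    (ktst t).Adj (.inl i) (.inl j) ↔ i ≠ j := by
  simp [ktst, eq_comm]

@[simp] lemma ktst_adj_inl_inr {t : ℕ} (i j : Fin t) :
    (ktst t).Adj (.inl i) (.inr j) ↔ i = j := by
  simp [ktst]

@[simp] lemma ktst_not_adj_inr_inr {t : ℕ} (i j : Fin t) :
    ¬ (ktst t).Adj (.inr i) (.inr j) := by
  simp [ktst]

section CrossMatching

variable {V : Type} {ι : Type*} {G : SimpleGraph V} {a b : ι → V}

structure IsCrossMatching (G : SimpleGraph V) (a b : ι → V) : Prop where
  injective_left : Injective a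
  injective_right : Injective b
  ne : ∀ i j, a i ≠ b j
  adj_iff : ∀ i j, G.Adj (a i) (b j) ↔ i = j

namespace IsCrossMatching

lemma symm (hab : IsCrossMatching G a b) : IsCrossMatching G b a :=
  ⟨hab.injective_right, hab.injective_left, fun i j => (hab.ne j i).symm,
    fun i j => by rw [G.adj_comm, hab.adj_iff, eq_comm]⟩

lemma hasInducedMinor (hab : IsCrossMatching G a b) {t : ℕ} {H : SimpleGraph (Fin t ⊕ Fin t)}
    (hH_inl : ∀ i j, H.Adj (.inl i) (.inl j) ↔ i ≠ j)
    (hH_cross : ∀ i j, H.Adj (.inl i) (.inr j) ↔ i = j)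
    {P Q : Fin t → Set ι} (hP : IsCliqueModel (G.comap a) P)
    (hQ : ∀ i, ((G.comap b).induce (Q i)).Connected) (hQ_disj : Pairwise (Disjoint on Q))
    (hH_inr : ∀ i j, i ≠ j → (H.Adj (.inr i) (.inr j) ↔ ∃ p ∈ Q i, ∃ q ∈ Q j, G.Adj (b p) (b q)))
    (hPQ : ∀ i j, (P i ∩ Q j).Nonempty ↔ i = j) :
    HasInducedMinor G H := by
  have hcross {i j : Fin t} {p q : ι} (hp : p ∈ P i) (hq : q ∈ Q j) (h : G.Adj (a p) (b q)) :
      i = j := (hPQ i j).mp ⟨p, hp, (hab.adj_iff p q).mp h ▸ hq⟩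
  have hdiag (i : Fin t) : ∃ p ∈ P i, ∃ q ∈ Q i, G.Adj (a p) (b q) := by
    obtain ⟨c, hcP, hcQ⟩ := (hPQ i i).mpr rfl
    exact ⟨c, hcP, c, hcQ, (hab.adj_iff c c).mpr rfl⟩
  refine ⟨Sum.elim (fun i => a '' P i) (fun i => b '' Q i), ?_, ?_, ?_, ?_⟩
  · rintro (i | i)
    exacts [connected_induce_image_of_comap (hP.connected i),
      connected_induce_image_of_comap (hQ i)]
  · rintro (i | i) (j | j) hij
    · exact (Set.disjoint_image_iff hab.injective_left).mpr (hP.disjoint fun h => hij (h ▸ rfl))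
    · exact Set.disjoint_left.mpr fun _ ⟨p, _, hp⟩ ⟨q, _, hq⟩ => hab.ne p q (hp.trans hq.symm)
    · exact Set.disjoint_left.mpr fun _ ⟨p, _, hp⟩ ⟨q, _, hq⟩ => hab.ne q p (hq.trans hp.symm)
    · exact (Set.disjoint_image_iff hab.injective_right).mpr (hQ_disj fun h => hij (h ▸ rfl))
  · rintro (i | i) (j | j) hij
    · obtain ⟨p, hp, q, hq, hpq⟩ := hP.exists_adj ((hH_inl i j).mp hij)
      exact ⟨a p, Set.mem_image_of_mem a hp, a q, Set.mem_image_of_mem a hq, hpq⟩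
    · obtain rfl := (hH_cross i j).mp hij
      obtain ⟨p, hp, q, hq, hpq⟩ := hdiag i
      exact ⟨a p, Set.mem_image_of_mem a hp, b q, Set.mem_image_of_mem b hq, hpq⟩
    · obtain rfl := (hH_cross j i).mp hij.symm
      obtain ⟨p, hp, q, hq, hpq⟩ := hdiag j
      exact ⟨b q, Set.mem_image_of_mem b hq, a p, Set.mem_image_of_mem a hp, hpq.symm⟩
    · obtain ⟨p, hp, q, hq, hpq⟩ := (hH_inr i j (H.ne_of_adj hij ∘ congrArg _)).mp hij
      exact ⟨b p, Set.mem_image_of_mem b hp, b q, Set.mem_image_of_mem b hq, hpq⟩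
  · rintro (i | i) (j | j) hij hnadj _ ⟨p, hp, rfl⟩ _ ⟨q, hq, rfl⟩ hpq
    · exact hnadj ((hH_inl i j).mpr fun h => hij (h ▸ rfl))
    · exact hnadj ((hH_cross i j).mpr (hcross hp hq hpq))
    · exact hnadj ((hH_cross j i).mpr (hcross hq hp hpq.symm)).symm
    · exact hnadj ((hH_inr i j fun h => hij (h ▸ rfl)).mpr ⟨p, hp, q, hq, hpq⟩)

lemma hasInducedMinor_ktkt (hab : IsCrossMatching G a b) {t : ℕ} {P Q : Fin t → Set ι}
    (hP : IsCliqueModel (G.comap a) P) (hQ : IsCliqueModel (G.comap b) Q)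
    (hPQ : ∀ i j, (P i ∩ Q j).Nonempty ↔ i = j) : HasInducedMinor G (ktkt t) :=
  hab.hasInducedMinor (by simp) (by simp) hP hQ.connected hQ.disjoint
    (fun i j hij => by simpa [hij] using hQ.exists_adj hij) hPQ

lemma hasInducedMinor_ktst (hab : IsCrossMatching G a b) {t : ℕ} {P : Fin t → Set ι}
    (hP : IsCliqueModel (G.comap a) P) {x : Fin t → ι} (hxP : ∀ i j, x j ∈ P i ↔ i = j)
    (hx : Pairwise fun i j => ¬ G.Adj (b (x i)) (b (x j))) : HasInducedMinor G (ktst t) := by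
  have hxinj : Injective x := hP.injective_of_mem fun i => (hxP i i).mpr rfl
  refine hab.hasInducedMinor (Q := fun i => {x i}) (by simp) (by simp) hP
    (fun i => ⟨.of_subsingleton⟩) (fun i j hij => Set.disjoint_singleton.mpr (hxinj.ne hij))
    (fun i j hij => by simpa using hx hij) (fun i j => by simpa using hxP i j)

end IsCrossMatching

lemma IsCrossMatching.isSimMatching (hab : IsCrossMatching G a b) {A : Set V}
    (haA : ∀ i, a i ∈ A) (hbA : ∀ i, b i ∉ A) {I : Finset ι} (hIa : (G.comap a).IsIndepSet I)
    (hIb : (G.comap b).IsIndepSet I) : IsSimMatching G A #I := by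
  set e : Fin #I → ι := fun i => I.equivFin.symm i
  have he : Injective e := Subtype.val_injective.comp I.equivFin.symm.injective
  have hindep {f : ι → V} (hf : (G.comap f).IsIndepSet I) (i j : Fin #I) :
      ¬ G.Adj (f (e i)) (f (e j)) := by
    rcases eq_or_ne i j with rfl | hij
    · exact G.irrefl
    · exact hf (I.equivFin.symm i).2 (I.equivFin.symm j).2 (he.ne hij)
  exact ⟨a ∘ e, b ∘ e, hab.injective_left.comp he, hab.injective_right.comp he, fun _ => haA _,
    fun _ => hbA _, fun _ _ => (hab.adj_iff _ _).trans he.eq_iff, hindep hIa, hindep hIb⟩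

/-- `8(w+1)t³ ≥ 2t² (2t(2w+1) - 1)` indices give `2t²` branch sets on the `b`-side or a
`b`-independent set of size `t(2w+1)`, which in turn contains `t` branch sets on the `a`-side or
`w + 1` indices independent on both sides. -/
theorem IsCrossMatching.hasInducedMinor_ktkt_or_ktst [Fintype ι] (hab : IsCrossMatching G a b)
    {w t : ℕ} (hcard : 8 * (w + 1) * t ^ 3 ≤ Fintype.card ι)
    (hsim : ∀ I : Finset ι, (G.comap a).IsIndepSet I → (G.comap b).IsIndepSet I → #I ≤ w) :
    HasInducedMinor G (ktkt t) ∨ HasInducedMinor G (ktst t) := by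
  have hcard' : 2 * t ^ 2 * (2 * (t * (2 * w + 1)) - 1) ≤ #(univ : Finset ι) := by
    rw [card_univ]
    refine (Nat.mul_le_mul_left _ (Nat.sub_le _ _)).trans (le_trans ?_ hcard)
    nlinarith [Nat.zero_le (t ^ 3 * w)]
  rcases exists_isNIndepSet_or_isCliqueModel (G.comap b) univ hcard' with ⟨T, -, hT⟩ | ⟨L, -, hL⟩
  · rcases exists_isNIndepSet_or_isCliqueModel (G.comap a) T (k := w + 1) (q := t)
      (by rw [hT.card_eq]; exact Nat.mul_le_mul_left _ (by omega)) with ⟨I, hIT, hI⟩ | ⟨J, hJT, hJ⟩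
    · have := hsim I hI.isIndepSet (hT.isIndepSet.mono (coe_subset.mpr hIT))
      have := hI.card_eq
      omega
    · choose x hx using hJ.nonempty
      exact .inr (hab.hasInducedMinor_ktst hJ (fun i j => (hJ.mem_iff hx).trans eq_comm)
        fun i j hij =>
          hT.isIndepSet (hJT i (hx i)) (hJT j (hx j)) ((hJ.injective_of_mem hx).ne hij))
  · choose y hy using hL.nonempty
    rcases exists_isNIndepSet_or_isCliqueModel ((G.comap a).comap y) univ (k := t) (q := t)
      (by rw [card_univ, Fintype.card_fin]; nlinarith [Nat.sub_le (2 * t) 1])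
      with ⟨Y, -, hY⟩ | ⟨J, -, hJ⟩
    · let κ := Y.orderEmbOfFin hY.card_eq
      refine .inr (hab.symm.hasInducedMinor_ktst (hL.comp κ.injective) (x := y ∘ κ)
        (fun i j => ?_) fun i j hij => hY.isIndepSet (Y.orderEmbOfFin_mem _ i)
          (Y.orderEmbOfFin_mem _ j) (κ.injective.ne hij))
      simp [hL.mem_iff hy, eq_comm]
    · choose k hk using hJ.nonempty
      refine .inl (hab.hasInducedMinor_ktkt (hJ.image (hL.injective_of_mem hy))
        (hL.comp (hJ.injective_of_mem hk)) fun i j => ⟨?_, ?_⟩)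
      · rintro ⟨_, ⟨u, hu, rfl⟩, huL⟩
        obtain rfl := (hL.mem_iff hy).mp huL
        exact ((hJ.mem_iff hk).mp hu).symm
      · rintro rfl
        exact ⟨y (k i), Set.mem_image_of_mem y (hk i), hy (k i)⟩

end CrossMatching

section Width

variable {V : Type} {G : SimpleGraph V} {A : Set V}

lemma IsMimMatching.exists_isCrossMatching {m : ℕ} (h : IsMimMatching G A m) :
    ∃ a b : Fin m → V, IsCrossMatching G a b ∧ (∀ i, a i ∈ A) ∧ (∀ i, b i ∉ A) := by
  obtain ⟨a, b, ha, hb, haA, hbA, hab⟩ := h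
  exact ⟨a, b, ⟨ha, hb, fun i j h => hbA j (h ▸ haA i), hab⟩, haA, hbA⟩

variable [Fintype V]

lemma IsSimMatching.le_card {m : ℕ} (h : IsSimMatching G A m) : m ≤ Fintype.card V := by
  obtain ⟨a, -, ha, -⟩ := h
  simpa using Fintype.card_le_of_injective a ha

lemma IsSimMatching.le_simval {m : ℕ} (h : IsSimMatching G A m) : m ≤ simval G A :=
  le_csSup ⟨_, fun _ => IsSimMatching.le_card⟩ h

lemma simval_le_card (G : SimpleGraph V) (A : Set V) : simval G A ≤ Fintype.card V :=
  csSup_le' fun _ => IsSimMatching.le_card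

theorem mimval_le_of_simval_le {w t : ℕ} (h1 : ¬ HasInducedMinor G (ktkt t))
    (h2 : ¬ HasInducedMinor G (ktst t)) (hA : simval G A ≤ w) :
    mimval G A ≤ 8 * (w + 1) * t ^ 3 - 1 := by
  refine csSup_le' fun m hm => ?_
  obtain ⟨a, b, hab, haA, hbA⟩ := hm.exists_isCrossMatching
  by_contra hlt
  rcases hab.hasInducedMinor_ktkt_or_ktst (w := w) (t := t) (by simp only [Fintype.card_fin]; omega)
    fun I hIa hIb => (hab.isSimMatching haA hbA hIa hIb).le_simval.trans hA with h | h
  exacts [h1 h, h2 h]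

lemma fWidth_le_of_imp {f g : Set V → ℕ} {M w c : ℕ} (hfM : ∀ A, f A ≤ M) (hf : fWidth f ≤ w)
    (hfg : ∀ A, f A ≤ w → g A ≤ c) : fWidth g ≤ c := by
  rcases isEmpty_or_nonempty (BranchDecomp V) with hV | ⟨⟨D⟩⟩
  · simp [fWidth]
  · obtain ⟨D₀, hD₀⟩ := Nat.sInf_mem (s := {w | ∃ D : BranchDecomp V, ∀ x y, D.T.Adj x y →
      f (D.cut x y) ≤ w}) ⟨M, D, fun _ _ _ => hfM _⟩
    exact Nat.sInf_le ⟨D₀, fun x y hxy => hfg _ ((hD₀ x y hxy).trans hf)⟩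

end Width

/-- every graph of sim-width at most `w` with no induced minor isomorphic
to `K_t ⊠ K_t` or `K_t ⊠ S_t` has mim-width at most `8(w+1)t³ − 1`; more precisely, any
branch-decomposition of sim-width at most `w` has mim-width at most `8(w+1)t³ − 1`. -/
theorem stmt13 {V : Type} [Fintype V] (G : SimpleGraph V) (w t : ℕ)
    (hsim : simw G ≤ w)
    (h1 : ¬ HasInducedMinor G (ktkt t)) (h2 : ¬ HasInducedMinor G (ktst t)) :
    mimw G ≤ 8 * (w + 1) * t ^ 3 - 1 ∧
    ∀ D : BranchDecomp V,
      (∀ x y, D.T.Adj x y → simval G (D.cut x y) ≤ w) →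
      ∀ x y, D.T.Adj x y → mimval G (D.cut x y) ≤ 8 * (w + 1) * t ^ 3 - 1 := by
  have hcut (A : Set V) : simval G A ≤ w → mimval G A ≤ 8 * (w + 1) * t ^ 3 - 1 :=
    mimval_le_of_simval_le h1 h2
  exact ⟨fWidth_le_of_imp (simval_le_card G) hsim hcut, fun D hD x y hxy => hcut _ (hD x y hxy)⟩
end

section
/- For all integers p, q ≥ 1, the (p × q) Hsu-clique chain graph is chordal. -/
open SimpleGraph
open scoped Classical

private def rhoH {p q : ℕ} (v : Fin p × Fin q) : ℕ := (v.2 : ℕ) * p + (p - 1 - (v.1 : ℕ))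

private lemma hsu_adj_iff {p q : ℕ} (u v : Fin p × Fin q) :
    (hsu p q).Adj u v ↔ u ≠ v ∧ ((u.2 : ℕ) = (v.2 : ℕ) ∨
      ((u.2 : ℕ) + 1 = (v.2 : ℕ) ∧ (u.1 : ℕ) ≤ (v.1 : ℕ)) ∨
      ((v.2 : ℕ) + 1 = (u.2 : ℕ) ∧ (v.1 : ℕ) ≤ (u.1 : ℕ))) := by
  simp only [hsu, SimpleGraph.fromRel_adj, Fin.ext_iff, Fin.le_def]
  constructor
  · rintro ⟨h, h2⟩; exact ⟨h, by tauto⟩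
  · rintro ⟨h, h2⟩; exact ⟨h, by tauto⟩

private lemma rhoH_step {p q : ℕ} {v w : Fin p × Fin q}
    (h : (hsu p q).Adj v w) (hr : rhoH v < rhoH w) :
    ((w.2 : ℕ) = (v.2 : ℕ) ∧ (w.1 : ℕ) < (v.1 : ℕ)) ∨
    ((v.2 : ℕ) + 1 = (w.2 : ℕ) ∧ (v.1 : ℕ) ≤ (w.1 : ℕ)) := by
  rw [hsu_adj_iff] at h
  obtain ⟨hne, h⟩ := h
  have hv1 := v.1.isLt
  have hw1 := w.1.isLt
  have hne' : (v.1 : ℕ) ≠ (w.1 : ℕ) ∨ (v.2 : ℕ) ≠ (w.2 : ℕ) := by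
    by_contra hc
    push_neg at hc
    exact hne (Prod.ext (Fin.ext hc.1) (Fin.ext hc.2))
  unfold rhoH at hr
  rcases h with h | h | h
  · have hmul : (v.2 : ℕ) * p = (w.2 : ℕ) * p := by rw [h]
    left; omega
  · right; exact h
  · exfalso
    have hmul : (v.2 : ℕ) * p = (w.2 : ℕ) * p + p := by
      rw [← h.1]; ring
    omega

private lemma rhoH_inj {p q : ℕ} : Function.Injective (rhoH (p := p) (q := q)) := by
  intro v w h
  have hv1 := v.1.isLt
  have hw1 := w.1.isLt
  unfold rhoH at h
  have hcol : (v.2 : ℕ) = (w.2 : ℕ) := by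
    rcases lt_trichotomy (v.2 : ℕ) (w.2 : ℕ) with hlt | he | hlt
    · exfalso
      have : ((v.2 : ℕ) + 1) * p ≤ (w.2 : ℕ) * p := Nat.mul_le_mul_right _ hlt
      have : (v.2 : ℕ) * p + p ≤ (w.2 : ℕ) * p := by linarith [this, (by ring : ((v.2:ℕ)+1)*p = (v.2:ℕ)*p + p)]
      omega
    · exact he
    · exfalso
      have : ((w.2 : ℕ) + 1) * p ≤ (v.2 : ℕ) * p := Nat.mul_le_mul_right _ hlt
      have : (w.2 : ℕ) * p + p ≤ (v.2 : ℕ) * p := by linarith [this, (by ring : ((w.2:ℕ)+1)*p = (w.2:ℕ)*p + p)]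
      omega
  have hmul : (v.2 : ℕ) * p = (w.2 : ℕ) * p := by rw [hcol]
  exact Prod.ext (Fin.ext (by omega)) (Fin.ext hcol)

private lemma hsu_key {p q : ℕ} {v w1 w2 : Fin p × Fin q}
    (h1 : (hsu p q).Adj v w1) (h2 : (hsu p q).Adj v w2) (hne : w1 ≠ w2)
    (hr1 : rhoH v < rhoH w1) (hr2 : rhoH v < rhoH w2) : (hsu p q).Adj w1 w2 := by
  have c1 := rhoH_step h1 hr1
  have c2 := rhoH_step h2 hr2
  rw [hsu_adj_iff]
  refine ⟨hne, ?_⟩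
  rcases c1 with ⟨e1, l1⟩ | ⟨e1, l1⟩ <;> rcases c2 with ⟨e2, l2⟩ | ⟨e2, l2⟩
  · left; omega
  · right; left; omega
  · right; right; omega
  · left; omega

private lemma cycleG_adj_iff {n : ℕ} (x y : ZMod n) :
    (cycleG n).Adj x y ↔ x ≠ y ∧ (y = x + 1 ∨ x = y + 1) := by
  simp [cycleG, SimpleGraph.fromRel_adj]

/-- the `(p × q)` Hsu-clique chain graph is chordal. -/
theorem stmt15 (p q : ℕ) (hp : 1 ≤ p) (hq : 1 ≤ q) : Chordal (hsu p q) := by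
  intro n hn hc
  obtain ⟨f, hinj, hadj⟩ := hc
  haveI : NeZero n := ⟨by omega⟩
  have hcast : ∀ m : ℕ, ((m : ZMod n) = 0) → n ∣ m := fun m hm =>
    (ZMod.natCast_eq_zero_iff m n).mp hm
  have h1 : (1 : ZMod n) ≠ 0 := by
    intro h
    have := Nat.le_of_dvd one_pos (hcast 1 (by exact_mod_cast h))
    omega
  have h2 : (2 : ZMod n) ≠ 0 := by
    intro h
    have := Nat.le_of_dvd two_pos (hcast 2 (by exact_mod_cast h))
    omega
  have h3 : (3 : ZMod n) ≠ 0 := by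
    intro h
    have := Nat.le_of_dvd (by norm_num) (hcast 3 (by exact_mod_cast h))
    omega
  obtain ⟨x, -, hx⟩ := Finset.exists_min_image (Finset.univ : Finset (ZMod n))
    (fun z => rhoH (f z)) ⟨0, Finset.mem_univ 0⟩
  have hxp : x ≠ x + 1 := by
    intro h; exact h1 (by linear_combination -h)
  have hxm : x ≠ x - 1 := by
    intro h; exact h1 (by linear_combination h)
  have hpm : x - 1 ≠ x + 1 := by
    intro h; exact h2 (by linear_combination -h)
  have adjp : (hsu p q).Adj (f x) (f (x + 1)) :=
    (hadj x (x + 1)).mp ((cycleG_adj_iff x (x + 1)).mpr ⟨hxp, Or.inl rfl⟩)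
  have adjm : (hsu p q).Adj (f x) (f (x - 1)) :=
    (hadj x (x - 1)).mp ((cycleG_adj_iff x (x - 1)).mpr ⟨hxm, Or.inr (by ring)⟩)
  have hrp : rhoH (f x) < rhoH (f (x + 1)) := by
    refine lt_of_le_of_ne (hx _ (Finset.mem_univ _)) ?_
    intro h
    exact hxp (hinj (rhoH_inj h))
  have hrm : rhoH (f x) < rhoH (f (x - 1)) := by
    refine lt_of_le_of_ne (hx _ (Finset.mem_univ _)) ?_
    intro h
    exact hxm (hinj (rhoH_inj h))
  have hw : f (x - 1) ≠ f (x + 1) := fun h => hpm (hinj h)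
  have hchord : (hsu p q).Adj (f (x - 1)) (f (x + 1)) :=
    hsu_key adjm adjp hw hrm hrp
  have := (cycleG_adj_iff (x - 1) (x + 1)).mp ((hadj (x - 1) (x + 1)).mpr hchord)
  rcases this.2 with h | h
  · exact h1 (by linear_combination h)
  · exact h3 (by linear_combination -h)
end

section
/- For all integers p, q ≥ 1, the (p × q) Hsu-clique chain graph contains no induced minor isomorphic to K_3 ⊠ S_3. -/
open SimpleGraph
open scoped Classical

lemma keyZ (P d e : ℤ) (hP : 1 ≤ P) (he : |e| < P) :
    |d * (P + 1) - e| ≤ P + 1 ↔ (d = 0 ∨ (d = 1 ∧ 0 ≤ e) ∨ (d = -1 ∧ e ≤ 0)) := by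
  rw [abs_lt] at he
  obtain ⟨he1, he2⟩ := he
  have hd : d ≤ -2 ∨ d = -1 ∨ d = 0 ∨ d = 1 ∨ 2 ≤ d := by omega
  rcases hd with h | h | h | h | h
  · have h2 : d * (P + 1) ≤ -2 * (P + 1) := by nlinarith
    rw [abs_le]
    constructor
    · rintro ⟨h3, h4⟩; exfalso; linarith
    · rintro (rfl | ⟨rfl, _⟩ | ⟨rfl, _⟩) <;> omega
  · subst h
    rw [show (-1 : ℤ) * (P + 1) - e = -((P + 1) + e) by ring, abs_neg, abs_le]
    omega
  · subst h
    rw [show (0 : ℤ) * (P + 1) - e = -e by ring, abs_neg, abs_le]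
    omega
  · subst h
    rw [show (1 : ℤ) * (P + 1) - e = (P + 1) - e by ring, abs_le]
    omega
  · have h2 : 2 * (P + 1) ≤ d * (P + 1) := by nlinarith
    rw [abs_le]
    constructor
    · rintro ⟨h3, h4⟩; exfalso; linarith
    · rintro (rfl | ⟨rfl, _⟩ | ⟨rfl, _⟩) <;> omega

lemma hsu_char (p q : ℕ) (hp : 1 ≤ p) (u v : Fin p × Fin q) :
    (hsu p q).Adj u v ↔ u ≠ v ∧
      abs ((((u.2 : ℤ) * ((p : ℤ) + 1) - (u.1 : ℤ)) - ((v.2 : ℤ) * ((p : ℤ) + 1) - (v.1 : ℤ)))) ≤ (p : ℤ) + 1 := by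
  rw [hsu, SimpleGraph.fromRel_adj]
  apply and_congr_right
  intro hne
  have h1 : (u.1 : ℕ) < p := u.1.isLt
  have h2 : (v.1 : ℕ) < p := v.1.isLt
  have hkey := keyZ (p : ℤ) ((u.2 : ℤ) - (v.2 : ℤ)) ((u.1 : ℤ) - (v.1 : ℤ))
    (by exact_mod_cast hp) (by rw [abs_lt]; omega)
  rw [show ((u.2 : ℤ) * ((p : ℤ) + 1) - (u.1 : ℤ)) - ((v.2 : ℤ) * ((p : ℤ) + 1) - (v.1 : ℤ))
      = ((u.2 : ℤ) - (v.2 : ℤ)) * ((p : ℤ) + 1) - ((u.1 : ℤ) - (v.1 : ℤ)) by ring, hkey]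
  simp only [Fin.ext_iff, Fin.le_def]
  omega
lemma gap_aux {V : Type} (G : SimpleGraph V) (L : V → ℤ) (K : ℤ)
    (hchar : ∀ u v : V, G.Adj u v → |L u - L v| ≤ K) (A : Set V) (c : ℤ) :
    ∀ {x y : A} (_ : (G.induce A).Walk x y), L (x : V) ≤ c + K → c ≤ L (y : V) →
      ∃ d ∈ A, c ≤ L d ∧ L d ≤ c + K := by
  intro x y w
  induction w with
  | nil =>
    rename_i z
    exact fun h1 h2 => ⟨(z : V), z.2, h2, h1⟩
  | cons h w ih =>
    rename_i x' u' y'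
    intro h1 h2
    by_cases hx : c ≤ L (x' : V)
    · exact ⟨(x' : V), x'.2, hx, h1⟩
    · apply ih ?_ h2
      have hG : G.Adj (x' : V) (u' : V) := by
        simpa using h
      have := hchar _ _ hG
      rw [abs_le] at this
      omega

lemma gap_lemma {V : Type} (G : SimpleGraph V) (L : V → ℤ) (K : ℤ)
    (hchar : ∀ u v : V, G.Adj u v → |L u - L v| ≤ K) {A : Set V}
    (hA : (G.induce A).Connected) {a b : V} (ha : a ∈ A) (hb : b ∈ A) (c : ℤ)
    (h1 : L a ≤ c + K) (h2 : c ≤ L b) :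
    ∃ d ∈ A, c ≤ L d ∧ L d ≤ c + K := by
  obtain ⟨w⟩ := hA.preconnected ⟨a, ha⟩ ⟨b, hb⟩
  exact gap_aux G L K hchar A c w h1 h2
lemma no_ktst3 {V : Type} [Finite V] (G : SimpleGraph V) (L : V → ℤ) (K : ℤ)
    (hK : 0 ≤ K)
    (hchar : ∀ u v : V, G.Adj u v ↔ u ≠ v ∧ |L u - L v| ≤ K) :
    ¬ HasInducedMinor G (ktst 3) := by
  rintro ⟨S, hconn, hdisj, hedge, hnedge⟩
  have hchar' : ∀ u v : V, G.Adj u v → |L u - L v| ≤ K := fun u v h => ((hchar u v).1 h).2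
  have hne : ∀ w, (S w).Nonempty := by
    intro w
    obtain ⟨⟨v, hv⟩⟩ := (hconn w).nonempty
    exact ⟨v, hv⟩
  have hfin : ∀ w : Fin 3 ⊕ Fin 3, (L '' S w).Finite := fun w => Set.toFinite _
  have hfne : ∀ w, ((hfin w).toFinset).Nonempty := by
    intro w
    rw [Set.Finite.toFinset_nonempty]
    exact (hne w).image L
  set m : Fin 3 ⊕ Fin 3 → ℤ := fun w => ((hfin w).toFinset).min' (hfne w) with hm
  set M : Fin 3 ⊕ Fin 3 → ℤ := fun w => ((hfin w).toFinset).max' (hfne w) with hM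
  have hmle : ∀ w, ∀ a ∈ S w, m w ≤ L a := by
    intro w a ha
    exact Finset.min'_le _ _ (by rw [Set.Finite.mem_toFinset]; exact ⟨a, ha, rfl⟩)
  have hleM : ∀ w, ∀ a ∈ S w, L a ≤ M w := by
    intro w a ha
    exact Finset.le_max' _ _ (by rw [Set.Finite.mem_toFinset]; exact ⟨a, ha, rfl⟩)
  have hmex : ∀ w, ∃ a ∈ S w, L a = m w := by
    intro w
    have := ((hfin w).toFinset).min'_mem (hfne w)
    rw [Set.Finite.mem_toFinset] at this
    obtain ⟨a, ha, h⟩ := this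
    exact ⟨a, ha, h⟩
  have hMex : ∀ w, ∃ a ∈ S w, L a = M w := by
    intro w
    have := ((hfin w).toFinset).max'_mem (hfne w)
    rw [Set.Finite.mem_toFinset] at this
    obtain ⟨a, ha, h⟩ := this
    exact ⟨a, ha, h⟩
  have hmM : ∀ w, m w ≤ M w := by
    intro w
    obtain ⟨a, ha, h⟩ := hmex w
    have := hleM w a ha
    omega
  -- adjacent branch sets give close intervals
  have hcloseE : ∀ w w', (ktst 3).Adj w w' → (m w' ≤ M w + K ∧ m w ≤ M w' + K) := by
    intro w w' h
    obtain ⟨a, ha, b, hb, hab⟩ := hedge w w' h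
    have habs := abs_le.mp (hchar' _ _ hab)
    have q1 := hmle w' b hb
    have q2 := hleM w a ha
    have q3 := hmle w a ha
    have q4 := hleM w' b hb
    exact ⟨by omega, by omega⟩
  -- non-adjacent branch sets are far apart
  have hfar : ∀ w w', w ≠ w' → ¬ (ktst 3).Adj w w' →
      (M w + K < m w' ∨ M w' + K < m w) := by
    intro w w' hww hnadj
    by_contra hcon
    push_neg at hcon
    obtain ⟨h1, h2⟩ := hcon
    have noedge := hnedge w w' hww hnadj
    have hneqel : ∀ a ∈ S w, ∀ b ∈ S w', a ≠ b := by
      intro a ha b hb heq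
      exact (Set.disjoint_left.mp (hdisj w w' hww) ha) (heq ▸ hb)
    obtain ⟨aM, haM, haMv⟩ := hMex w
    obtain ⟨am, ham, hamv⟩ := hmex w
    obtain ⟨bM, hbM, hbMv⟩ := hMex w'
    obtain ⟨bm, hbm, hbmv⟩ := hmex w'
    by_cases hc1 : M w < m w'
    · exact noedge aM haM bm hbm ((hchar _ _).2 ⟨hneqel _ haM _ hbm, by rw [abs_le]; omega⟩)
    by_cases hc2 : M w' < m w
    · exact noedge am ham bM hbM ((hchar _ _).2 ⟨hneqel _ ham _ hbM, by rw [abs_le]; omega⟩)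
    push_neg at hc1 hc2
    by_cases hmm : m w ≤ m w'
    · obtain ⟨d, hd, hd1, hd2⟩ := gap_lemma G L K hchar' (hconn w) ham haM (m w')
        (by omega) (by omega)
      exact noedge d hd bm hbm ((hchar _ _).2 ⟨hneqel _ hd _ hbm, by rw [abs_le]; omega⟩)
    · push_neg at hmm
      obtain ⟨d, hd, hd1, hd2⟩ := gap_lemma G L K hchar' (hconn w') hbm hbM (m w)
        (by omega) (by omega)
      exact noedge am ham d hd ((hchar _ _).2 ⟨hneqel _ ham _ hd, by rw [abs_le]; omega⟩)
  -- adjacency facts in ktst 3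
  have hA_xx : ∀ i j : Fin 3, i ≠ j → (ktst 3).Adj (Sum.inl i) (Sum.inl j) := by
    intro i j hij
    rw [ktst, SimpleGraph.fromRel_adj]
    exact ⟨by simp [hij], Or.inl hij⟩
  have hA_xy : ∀ i : Fin 3, (ktst 3).Adj (Sum.inl i) (Sum.inr i) := by
    intro i
    rw [ktst, SimpleGraph.fromRel_adj]
    exact ⟨by simp, Or.inl rfl⟩
  have hN_xy : ∀ i j : Fin 3, i ≠ j → ¬ (ktst 3).Adj (Sum.inl i) (Sum.inr j) := by
    intro i j hij h
    rw [ktst, SimpleGraph.fromRel_adj] at h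
    rcases h.2 with h | h
    · exact hij h
    · exact h
  have hN_yy : ∀ i j : Fin 3, ¬ (ktst 3).Adj (Sum.inr i) (Sum.inr j) := by
    intro i j h
    rw [ktst, SimpleGraph.fromRel_adj] at h
    rcases h.2 with h | h <;> exact h
  -- derived interval facts
  have hR : ∀ i j : Fin 3, i ≠ j →
      (M (Sum.inr i) + K < m (Sum.inr j) ∨ M (Sum.inr j) + K < m (Sum.inr i)) := by
    intro i j hij
    exact hfar _ _ (by simp [hij]) (hN_yy i j)
  have hfarXY : ∀ i j : Fin 3, i ≠ j →
      (M (Sum.inl i) + K < m (Sum.inr j) ∨ M (Sum.inr j) + K < m (Sum.inl i)) := by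
    intro i j hij
    exact hfar _ _ (by simp) (hN_xy i j hij)
  have hcXX : ∀ i j : Fin 3, i ≠ j →
      (m (Sum.inl j) ≤ M (Sum.inl i) + K ∧ m (Sum.inl i) ≤ M (Sum.inl j) + K) :=
    fun i j h => hcloseE _ _ (hA_xx i j h)
  have hcXY : ∀ i : Fin 3,
      (m (Sum.inr i) ≤ M (Sum.inl i) + K ∧ m (Sum.inl i) ≤ M (Sum.inr i) + K) :=
    fun i => hcloseE _ _ (hA_xy i)
  -- the asteroidal-triple contradiction
  have key : ∀ a b c : Fin 3, a ≠ b → b ≠ c → a ≠ c →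
      M (Sum.inr a) + K < m (Sum.inr b) → M (Sum.inr b) + K < m (Sum.inr c) → False := by
    intro a b c hab hbc hac h1 h2
    have c1 := hcXX a c hac
    have c2 := hcXY a
    have c3 := hcXY c
    have f1 := hfarXY a b hab
    have f2 := hfarXY c b (fun h => hbc h.symm)
    have g1 := hmM (Sum.inr b)
    rcases f1 with h3 | h3 <;> rcases f2 with h4 | h4 <;>
      linarith [c1.1, c1.2, c2.1, c2.2, c3.1, c3.2]
  have h01 := hR 0 1 (by decide)
  have h12 := hR 1 2 (by decide)
  have h02 := hR 0 2 (by decide)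
  rcases h01 with a1 | a1 <;> rcases h12 with a2 | a2 <;> rcases h02 with a3 | a3
  · exact key 0 1 2 (by decide) (by decide) (by decide) a1 a2
  · exact key 0 1 2 (by decide) (by decide) (by decide) a1 a2
  · exact key 0 2 1 (by decide) (by decide) (by decide) a3 a2
  · exact key 2 0 1 (by decide) (by decide) (by decide) a3 a1
  · exact key 1 0 2 (by decide) (by decide) (by decide) a1 a3
  · exact key 1 2 0 (by decide) (by decide) (by decide) a2 a3
  · exact key 2 1 0 (by decide) (by decide) (by decide) a2 a1
  · exact key 2 1 0 (by decide) (by decide) (by decide) a2 a1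

/-- the `(p × q)` Hsu-clique chain graph contains no induced minor
isomorphic to `K₃ ⊠ S₃`. -/
theorem stmt16 (p q : ℕ) (hp : 1 ≤ p) (hq : 1 ≤ q) :
    ¬ HasInducedMinor (hsu p q) (ktst 3) := by
  exact no_ktst3 (hsu p q) (fun v => (v.2 : ℤ) * ((p : ℤ) + 1) - (v.1 : ℤ)) ((p : ℤ) + 1)
    (by positivity) (fun u v => hsu_char p q hp u v)
end

section
/- Let H be a bipartite graph with bipartition (A,B), and let G be a graph obtained from H by adding an arbitrary set of edges within A (i.e., V(G) = V(H), E(H) ⊆ E(G), and every edge of E(G)\E(H) joins two vertices of A). Then mimw(G) ≥ mimw(H)/2. -/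
open SimpleGraph
open scoped Classical

section Aux

variable {V : Type} [Fintype V]

lemma mimMatching_zero (G : SimpleGraph V) (X : Set V) : IsMimMatching G X 0 := by
  refine ⟨fun i => i.elim0, fun i => i.elim0, fun i => i.elim0, fun i => i.elim0,
    fun i => i.elim0, fun i => i.elim0, fun i => i.elim0⟩

lemma mimMatching_le_card {G : SimpleGraph V} {X : Set V} {m : ℕ}
    (h : IsMimMatching G X m) : m ≤ Fintype.card V := by
  obtain ⟨a, _, ha, _⟩ := h
  simpa using Fintype.card_le_of_injective a ha

lemma mimMatching_bddAbove (G : SimpleGraph V) (X : Set V) :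
    BddAbove {m | IsMimMatching G X m} :=
  ⟨Fintype.card V, fun _ hm => mimMatching_le_card hm⟩

lemma mim_of_class (G : SimpleGraph V) (X : Set V) {m : ℕ} (a b : Fin m → V)
    (ha : Function.Injective a) (hb : Function.Injective b)
    (haX : ∀ i, a i ∈ X) (hbX : ∀ i, b i ∉ X)
    (C : Finset (Fin m))
    (hadj : ∀ i ∈ C, ∀ j ∈ C, (G.Adj (a i) (b j) ↔ i = j)) :
    IsMimMatching G X C.card := by
  classical
  let e : Fin C.card → Fin m := fun i => (C.equivFin.symm i : Fin m)
  have he : Function.Injective e := by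
    intro i j h
    exact C.equivFin.symm.injective (Subtype.ext h)
  have heC : ∀ i, e i ∈ C := fun i => (C.equivFin.symm i).2
  refine ⟨a ∘ e, b ∘ e, ha.comp he, hb.comp he, fun i => haX _, fun i => hbX _, ?_⟩
  intro i j
  rw [Function.comp_apply, Function.comp_apply, hadj _ (heC i) _ (heC j)]
  exact ⟨fun h => he h, fun h => h ▸ rfl⟩

lemma cut_lemma (H G : SimpleGraph V) (A : Set V)
    (hbip : ∀ x y, H.Adj x y → (x ∈ A ∧ y ∉ A) ∨ (y ∈ A ∧ x ∉ A))
    (hle : H ≤ G)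
    (hnew : ∀ x y, G.Adj x y → ¬ H.Adj x y → x ∈ A ∧ y ∈ A)
    (X : Set V) : mimval H X ≤ 2 * mimval G X := by
  classical
  have hmem : sSup {m | IsMimMatching H X m} ∈ {m | IsMimMatching H X m} :=
    Nat.sSup_mem ⟨0, mimMatching_zero H X⟩ (mimMatching_bddAbove H X)
  set m0 := sSup {m | IsMimMatching H X m} with hm0
  obtain ⟨a, b, ha, hb, haX, hbX, hadj⟩ := hmem
  -- b i is on the opposite side of A from a i
  have hHG : ∀ x y, H.Adj x y → G.Adj x y := fun x y h => hle h
  have hopp : ∀ i : Fin m0, (a i ∈ A ↔ b i ∉ A) := by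
    intro i
    have h := hbip _ _ ((hadj i i).mpr rfl)
    rcases h with ⟨h1, h2⟩ | ⟨h1, h2⟩
    · exact ⟨fun _ => h2, fun _ => h1⟩
    · exact ⟨fun h => absurd h h2, fun h => absurd h1 h⟩
  set I : Finset (Fin m0) := Finset.univ.filter (fun i => a i ∈ A) with hI
  have hclass1 : ∀ i ∈ I, ∀ j ∈ I, (G.Adj (a i) (b j) ↔ i = j) := by
    intro i hi j hj
    simp only [hI, Finset.mem_filter] at hi hj
    constructor
    · intro h
      by_cases hH : H.Adj (a i) (b j)
      · exact (hadj i j).mp hH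
      · have := (hnew _ _ h hH).2
        exact absurd this ((hopp j).mp hj.2)
    · intro h; subst h; exact hHG _ _ ((hadj i i).mpr rfl)
  have hclass2 : ∀ i ∈ Iᶜ, ∀ j ∈ Iᶜ, (G.Adj (a i) (b j) ↔ i = j) := by
    intro i hi j hj
    simp only [hI, Finset.mem_compl, Finset.mem_filter, Finset.mem_univ, true_and] at hi hj
    constructor
    · intro h
      by_cases hH : H.Adj (a i) (b j)
      · exact (hadj i j).mp hH
      · exact absurd (hnew _ _ h hH).1 hi
    · intro h; subst h; exact hHG _ _ ((hadj i i).mpr rfl)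
  have h1 : I.card ≤ mimval G X :=
    le_csSup (mimMatching_bddAbove G X) (mim_of_class G X a b ha hb haX hbX I hclass1)
  have h2 : Iᶜ.card ≤ mimval G X :=
    le_csSup (mimMatching_bddAbove G X) (mim_of_class G X a b ha hb haX hbX Iᶜ hclass2)
  have hsum : I.card + Iᶜ.card = m0 := by
    rw [Finset.card_add_card_compl]; simp
  calc mimval H X = m0 := rfl
    _ = I.card + Iᶜ.card := hsum.symm
    _ ≤ 2 * mimval G X := by omega

end Aux

/-- if `H` is bipartite with bipartition `(A, Aᶜ)` and `G` is obtained
from `H` by adding edges within `A` only, then `mimw(G) ≥ mimw(H)/2`. -/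
theorem stmt18 {V : Type} [Fintype V] (H G : SimpleGraph V) (A : Set V)
    (hbip : ∀ x y, H.Adj x y → (x ∈ A ∧ y ∉ A) ∨ (y ∈ A ∧ x ∉ A))
    (hle : H ≤ G)
    (hnew : ∀ x y, G.Adj x y → ¬ H.Adj x y → x ∈ A ∧ y ∈ A) :
    (mimw H : ℝ) / 2 ≤ (mimw G : ℝ) := by
  classical
  have key : mimw H ≤ 2 * mimw G := by
    by_cases hne : {w | ∃ D : BranchDecomp V, ∀ x y, D.T.Adj x y →
        mimval G (D.cut x y) ≤ w}.Nonempty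
    · have hmem := Nat.sInf_mem hne
      obtain ⟨D, hD⟩ := hmem
      have : 2 * mimw G ∈ {w | ∃ D : BranchDecomp V, ∀ x y, D.T.Adj x y →
          mimval H (D.cut x y) ≤ w} := by
        refine ⟨D, fun x y hxy => ?_⟩
        calc mimval H (D.cut x y) ≤ 2 * mimval G (D.cut x y) :=
              cut_lemma H G A hbip hle hnew _
          _ ≤ 2 * mimw G := by
              have h2 : mimval G (D.cut x y) ≤ mimw G := hD x y hxy
              omega
      exact Nat.sInf_le this
    · have hG : mimw G = 0 := by
        rw [mimw, fWidth, Set.not_nonempty_iff_eq_empty.mp hne, Nat.sInf_empty]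
      have hH : mimw H = 0 := by
        rw [mimw, fWidth]
        have : {w | ∃ D : BranchDecomp V, ∀ x y, D.T.Adj x y →
            mimval H (D.cut x y) ≤ w} = ∅ := by
          rw [Set.eq_empty_iff_forall_notMem]
          rintro w ⟨D, -⟩
          refine hne ⟨Fintype.card V, D, fun x y _ => ?_⟩
          have hmem : sSup {m | IsMimMatching G (D.cut x y) m}
              ∈ {m | IsMimMatching G (D.cut x y) m} :=
            Nat.sSup_mem ⟨0, mimMatching_zero G _⟩ (mimMatching_bddAbove G _)
          exact mimMatching_le_card hmem
        rw [this, Nat.sInf_empty]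
      rw [hG, hH]
  have : (mimw H : ℝ) ≤ 2 * (mimw G : ℝ) := by exact_mod_cast key
  linarith
end
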